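/- Let (a,b) be a reversed sum-product pair for base β with a < β < b, and write b = b_r·β^r + ... + b₀ with r ≥ 1. Then there exist integers 0 ≤ λ < a and 0 ≤ ρ < a such that a + b₀ = a·b_r + λ and a·b₀ = b_r + ρ·β. -/

import Mathlib

/-!
Reversal swaps the units digit of each of `a + b`, `a * b` with the leading digit of the other.
Let `r = log β b` and `c = β ^ (r + 1)`. If `a + b ≥ c`, then `a + b = e + c` with `e < β` has
digits `e, 0, …, 0, 1`, so reversal forces `a * b = e * c + 1`, i.e. `(c - a) * (c - b) = 1`,
impossible because `c ≥ β ^ 2 > a + 1`. Hence `a + b` and `a * b` have `r + 1` digits, like `b`.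
The leading digit of `a * b` is at least `a * b_r ≥ a`, which rules out a carry in `a + b₀`;
the two digit equations then give `λ` and `ρ`.
-/

/-- `(a, b)` is a reversed sum-product pair for base `β`: `a ≤ b` are positive
integers and the base-`β` digit sequence of `a * b` is the reverse of that of
`a + b` (in particular they have the same number of digits). -/
def IsRSP (β a b : ℕ) : Prop :=
  0 < a ∧ a ≤ b ∧ Nat.digits β (a * b) = (Nat.digits β (a + b)).reverse

open Nat

namespace Nat

variable {a b β m n : ℕ}

theorem div_pow_log_lt (hβ : 1 < β) (n : ℕ) : n / β ^ log β n < β := by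
  rw [Nat.div_lt_iff_lt_mul (by positivity), ← pow_succ']
  exact lt_pow_succ_log_self hβ n

theorem mul_div_lt_mul_div_add (ha : 0 < a) {c : ℕ} (hc : 0 < c) :
    a * b / c < a * (b / c) + a := by
  rw [Nat.div_lt_iff_lt_mul hc]
  calc a * b < a * (b / c * c + c) := Nat.mul_lt_mul_of_pos_left (lt_div_mul_add hc) ha
    _ = (a * (b / c) + a) * c := by ring

theorem add_div_pow_eq_div_pow_of_add_mod_lt (h : a + b % β < β) {r : ℕ} (hr : r ≠ 0) :
    (a + b) / β ^ r = b / β ^ r := by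
  obtain ⟨k, rfl⟩ := exists_eq_succ_of_ne_zero hr
  have hβ : 0 < β := by omega
  have hdiv : (a + b) / β = b / β := by
    rw [← Nat.mod_add_div b β, ← add_assoc, add_mul_div_left _ _ hβ, add_mul_div_left _ _ hβ,
      Nat.div_eq_of_lt h, Nat.div_eq_of_lt (mod_lt b hβ)]
  rw [pow_succ', ← Nat.div_div_eq_div_mul, ← Nat.div_div_eq_div_mul, hdiv]

theorem log_eq_of_digits_eq_reverse (hβ : 1 < β) (h : digits β m = (digits β n).reverse) :
    log β m = log β n := by
  rcases eq_or_ne n 0 with rfl | hn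
  · simp_all [digits_eq_nil_iff_eq_zero]
  have hm : m ≠ 0 := by
    rw [← digits_ne_nil_iff_ne_zero, h, Ne, List.reverse_eq_nil_iff, digits_eq_nil_iff_eq_zero]
    exact hn
  have hlen := congrArg List.length h
  rw [List.length_reverse, length_digits _ _ hβ hm, length_digits _ _ hβ hn] at hlen
  omega

theorem mod_eq_div_pow_log_of_digits_eq_reverse (hβ : 2 ≤ β)
    (h : digits β m = (digits β n).reverse) : m % β = n / β ^ log β n := by
  rcases eq_or_ne n 0 with rfl | hn
  · simp_all [digits_eq_nil_iff_eq_zero]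
  have hlen : 0 < (digits β n).length := by
    rw [List.length_pos_iff, Ne, digits_eq_nil_iff_eq_zero]; exact hn
  have := getD_digits m 0 hβ
  rw [h, List.getD_eq_getElem _ _ (by simpa), List.getElem_reverse,
    ← List.getD_eq_getElem _ 0, getD_digits _ _ hβ, length_digits _ _ hβ hn] at this
  simpa [Nat.mod_eq_of_lt (div_pow_log_lt hβ n)] using this.symm

theorem eq_mul_pow_add_one_of_digits_eq_reverse (hβ : 1 < β)
    (h : digits β m = (digits β n).reverse) {e r : ℕ} (he : e < β)
    (hn : n = e + β ^ (r + 1)) :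
    m = e * β ^ (r + 1) + 1 := by
  have hdn : digits β n = e :: (List.replicate r 0 ++ [1]) := by
    rw [hn, pow_succ', digits_add _ hβ _ _ he (Or.inr (by positivity)),
      ← mul_one (β ^ r), digits_base_pow_mul hβ one_pos, digits_of_lt _ _ one_ne_zero hβ]
  rw [← ofDigits_digits β m, h, hdn, ofDigits_reverse_cons, List.reverse_append,
    List.reverse_replicate, List.length_append, List.length_replicate]
  simp only [List.reverse_singleton, List.singleton_append, ofDigits_cons, ofDigits_replicate_zero,
    List.length_singleton]
  ring

end Nat

namespace IsRSP

variable {β a b : ℕ}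

theorem digits_add_eq_reverse (h : IsRSP β a b) :
    digits β (a + b) = (digits β (a * b)).reverse := by
  rw [h.2.2, List.reverse_reverse]

theorem add_lt_pow_succ_log (hβ : 1 < β) (h : IsRSP β a b) (ha : a < β) (hb : β ≤ b) :
    a + b < β ^ (log β b + 1) := by
  set c := β ^ (log β b + 1)
  have hbc : b < c := lt_pow_succ_log_self hβ b
  have hc : β ^ 2 ≤ c := Nat.pow_le_pow_right (by omega) (by have := log_pos hβ hb; omega)
  by_contra! hcn
  have hab : a * b = (a + b - c) * c + 1 :=
    eq_mul_pow_add_one_of_digits_eq_reverse hβ h.2.2 (by omega) (by omega)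
  have hca : a + 2 ≤ c := by nlinarith
  zify [hcn] at hab hbc hca
  nlinarith

theorem log_add (hβ : 1 < β) (h : IsRSP β a b) (ha : a < β) (hb : β ≤ b) :
    log β (a + b) = log β b :=
  le_antisymm (Nat.lt_succ_iff.mp (log_lt_of_lt_pow (by omega) (h.add_lt_pow_succ_log hβ ha hb)))
    (log_mono_right (le_add_left b a))

theorem mul_div_pow_log (hβ : 2 ≤ β) (h : IsRSP β a b) (ha : a < β) (hb : β ≤ b) :
    a * b / β ^ log β b = (a + b) % β := by
  rw [← h.log_add hβ ha hb, ← log_eq_of_digits_eq_reverse hβ h.2.2]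
  exact (mod_eq_div_pow_log_of_digits_eq_reverse hβ h.digits_add_eq_reverse).symm

theorem mul_mod (hβ : 2 ≤ β) (h : IsRSP β a b) (ha : a < β) (hb : β ≤ b) :
    a * b % β = (a + b) / β ^ log β b := by
  rw [← h.log_add hβ ha hb]
  exact mod_eq_div_pow_log_of_digits_eq_reverse hβ h.2.2

theorem add_mod_lt (hβ : 2 ≤ β) (h : IsRSP β a b) (ha : a < β) (hb : β ≤ b) :
    a + b % β < β := by
  by_contra! hcarry
  have hmod : (a + b) % β = a + b % β - β := by
    rw [add_mod_eq_ite, mod_eq_of_lt ha, if_pos hcarry]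
  have hlead : a ≤ (a + b) % β := calc
    a ≤ a * (b / β ^ log β b) :=
      Nat.le_mul_of_pos_right a (div_pos (pow_log_le_self β (by omega)) (by positivity))
    _ ≤ a * b / β ^ log β b := mul_div_le_mul_div_assoc a b _
    _ = (a + b) % β := h.mul_div_pow_log hβ ha hb
  have := mod_lt b (by omega : 0 < β)
  omega

end IsRSP

theorem stmt_11 (β a b : ℕ) (hβ : 2 ≤ β) (h : IsRSP β a b)
    (ha : a < β) (hb : β < b) :
    ∃ lam rho : ℕ, lam < a ∧ rho < a ∧
      a + b % β = a * (b / β ^ ((Nat.digits β b).length - 1)) + lam ∧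
      a * (b % β) = b / β ^ ((Nat.digits β b).length - 1) + rho * β := by
  rw [length_digits _ _ hβ (by omega), Nat.add_sub_cancel]
  set r := log β b
  have hβ0 : 0 < β := by omega
  have ha0 : 0 < a := h.1
  have hcarry := h.add_mod_lt hβ ha hb.le
  have hsum : (a + b) % β = a + b % β := by
    rw [add_mod_eq_ite, mod_eq_of_lt ha, if_neg (by omega)]
  have hlead : a * b / β ^ r = a + b % β := hsum ▸ h.mul_div_pow_log hβ ha hb.le
  have hunit : a * (b % β) % β = b / β ^ r := by
    rw [mul_mod_mod, h.mul_mod hβ ha hb.le,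
      add_div_pow_eq_div_pow_of_add_mod_lt hcarry (log_pos hβ hb.le).ne']
  refine ⟨a * b / β ^ r - a * (b / β ^ r), a * (b % β) / β, ?_, ?_, ?_, ?_⟩
  · have := mul_div_lt_mul_div_add (b := b) ha0 (pow_pos hβ0 r)
    omega
  · exact (Nat.div_lt_iff_lt_mul hβ0).2 (Nat.mul_lt_mul_of_pos_left (mod_lt b hβ0) ha0)
  · have := mul_div_le_mul_div_assoc a b (β ^ r)
    omega
  · rw [← hunit, mul_comm _ β]
    exact (Nat.mod_add_div _ _).symm
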